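/- Let M ≥ N ≥ 1 be integers and a > −1 a real number. Let c be a complex number and R > 0 be such that |1 − c| < R, |1/(1+a) − c| < R, and |c| > R (so the positively oriented circle of center c and radius R encloses 1 and 1/(1+a) but not 0). Then for every real x, exp((a/(1+a))·2Mx) − (1+a)^{2(M−N)+1} · Σ_{j=0}^{2N−2} (−a)^j · L_j^{(2(M−N))}(2Mx) = −(1+a)^{2(M−N)+1} · a^{2N−1} · (e^{2Mx}/(2πi)) · ∮_{|z−c|=R} e^{−2Mxz} · z^{2M−1} / ( (z−1)^{2N−1} · ((1+a)z − 1) ) dz. -/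

import Mathlib

open MeasureTheory

/-- The generalized Laguerre polynomial
`L_n^(α)(x) = ∑_{k=0}^{n} (-1)^k (n+α choose n-k) x^k / k!`. -/
noncomputable def genLaguerre (n α : ℕ) (x : ℝ) : ℝ :=
  ∑ k ∈ Finset.range (n + 1),
    (-1 : ℝ) ^ k * ((n + α).choose (n - k) : ℝ) * x ^ k / (k.factorial : ℝ)

/-- The skew inner product
`⟨f, g⟩₄ = ∫_0^∞ (f(x) g'(x) - f'(x) g(x)) x^(2(M-N)+1) e^(-2Mx) dx`. -/
noncomputable def skewInner (M N : ℕ) (f g : ℝ → ℝ) : ℝ :=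
  ∫ x in Set.Ioi (0 : ℝ),
    (f x * deriv g x - deriv f x * g x) * x ^ (2 * (M - N) + 1) *
      Real.exp (-(2 * (M : ℝ)) * x)

/-! With `T = 2Mx`, `A = 1 + a`, `α = 2(M - N)` and `n = 2N - 1`, the telescoping identity
`∑_{j<n} (-a)^j z^(j+α) / (z-1)^(j+1)
  = z^α / (Az - 1) - (-a)^n z^(n+α) / ((z-1)^n (Az - 1))`
is integrated against `e^(-Tz)` around the circle. By Cauchy's formula for derivatives the
`j`-th term on the left gives `2πi e^(-T) L_j^(α)(T)`, since
`(d/dz)^j (e^(-Tz) z^(j+α))` at `z = 1` equals `j! e^(-T) L_j^(α)(T)` by the Leibniz rule,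
and the simple pole at `1/A` gives `2πi e^(-T/A) / A^(α+1)`. As `n` is odd,
`(-a)^n = -a^n`, which yields the identity after multiplying by `A^(α+1) e^T / (2πi)`.
-/

open Complex Metric Real

section CauchyFormula

variable {E : Type*} [NormedAddCommGroup E] [NormedSpace ℂ E] [CompleteSpace E]

theorem circleIntegral_one_div_sub_pow_smul_of_differentiable {f : ℂ → E}
    (hf : Differentiable ℂ f) {c w : ℂ} {R : ℝ} (hw : w ∈ ball c R) (n : ℕ) :
    ∮ z in C(c, R), (1 / (z - w) ^ (n + 1)) • f z
      = (2 * π * I / n.factorial) • iteratedDeriv n f w := by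
  have hR : 0 < R := dist_nonneg.trans_lt hw
  have hsub : ∀ z ∈ sphere c R, z - w ≠ 0 := fun z hz =>
    sub_ne_zero.2 (sphere_disjoint_ball.ne_of_mem hz hw)
  induction n generalizing f with
  | zero => simpa using hf.diffContOnCl.circleIntegral_sub_inv_smul hw
  | succ n ih =>
    -- An exact derivative integrates to zero around the circle, which trades the pole of
    -- order `n + 2` against `f` for one of order `n + 1` against `f'`.
    have hderiv : ∀ z ∈ sphere c R, HasDerivWithinAt (fun z => (1 / (z - w) ^ (n + 1)) • f z)
        ((1 / (z - w) ^ (n + 1)) • deriv f z -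
          ((n + 1 : ℂ) • ((1 / (z - w) ^ (n + 2)) • f z))) (sphere c R) z := by
      intro z hz
      have hpow : HasDerivAt (fun z => 1 / (z - w) ^ (n + 1))
          (-((n + 1 : ℂ) * (1 / (z - w) ^ (n + 2)))) z := by
        have := (((hasDerivAt_id z).sub_const w).pow (n + 1)).inv (pow_ne_zero _ (hsub z hz))
        simp only [one_div]
        refine this.congr_deriv ?_
        have := hsub z hz
        simp only [id, Pi.pow_apply, add_tsub_cancel_right, Nat.cast_add, Nat.cast_one]
        field_simp
        ring
      refine ((hpow.smul (hf z).hasDerivAt).congr_deriv ?_).hasDerivWithinAt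
      rw [neg_smul, mul_smul]
      abel
    have hcont : ∀ g : ℂ → E, Continuous g → ∀ m : ℕ,
        ContinuousOn (fun z => (1 / (z - w) ^ m) • g z) (sphere c R) := fun g hg m =>
      (continuousOn_const.div ((continuousOn_id.sub continuousOn_const).pow m)
        fun z hz => pow_ne_zero _ (hsub z hz)).smul hg.continuousOn
    have hzero := circleIntegral.integral_eq_zero_of_hasDerivWithinAt hR.le hderiv
    rw [circleIntegral.integral_sub
      (g := fun z => (n + 1 : ℂ) • ((1 / (z - w) ^ (n + 2)) • f z))
      ((hcont _ hf.deriv.continuous _).circleIntegrable hR.le)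
      ((continuousOn_const.smul (hcont _ hf.continuous _)).circleIntegrable hR.le),
      circleIntegral.integral_smul, ih hf.deriv, sub_eq_zero] at hzero
    have hfac : (2 * π * I / (n + 1).factorial : ℂ)
        = (n + 1 : ℂ)⁻¹ * (2 * π * I / n.factorial) := by
      rw [Nat.factorial_succ]
      push_cast
      field_simp
    rw [iteratedDeriv_succ', hfac, mul_smul, hzero, inv_smul_smul₀ (Nat.cast_add_one_ne_zero n)]

end CauchyFormula

theorem iteratedDeriv_cexp_mul_pow_one_eq_genLaguerre (t : ℝ) (j α : ℕ) :
    iteratedDeriv j (fun z => cexp (-t * z) * z ^ (j + α)) 1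
      = j.factorial * cexp (-t) * genLaguerre j α t := by
  rw [iteratedDeriv_fun_mul (by fun_prop) (by fun_prop), genLaguerre]
  simp only [iteratedDeriv_cexp_const_mul, iteratedDeriv_pow, one_pow, mul_one]
  push_cast
  rw [Finset.mul_sum]
  refine Finset.sum_congr rfl fun i hi => ?_
  have hij : i ≤ j := Nat.lt_succ_iff.1 (Finset.mem_range.1 hi)
  have key : (j.choose i * (j + α).descFactorial (j - i) * i.factorial : ℂ)
      = j.factorial * (j + α).choose (j - i) := by
    rw [← Nat.choose_mul_factorial_mul_factorial hij, Nat.descFactorial_eq_factorial_mul_choose]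
    push_cast
    ring
  rw [neg_pow]
  have hfac : (i.factorial : ℂ) ≠ 0 := Nat.cast_ne_zero.2 i.factorial_ne_zero
  field_simp
  linear_combination (t : ℂ) ^ i * key

theorem sum_neg_pow_mul_div_sub_one_pow {K : Type*} [Field K] {b z : K} (hz : z ≠ 1)
    (hb : (1 + b) * z - 1 ≠ 0) (e : K) (α n : ℕ) :
    ∑ j ∈ Finset.range n, (-b) ^ j * (e * z ^ (j + α) / (z - 1) ^ (j + 1)) =
      e * z ^ α / ((1 + b) * z - 1) -
        (-b) ^ n * (e * z ^ (n + α) / ((z - 1) ^ n * ((1 + b) * z - 1))) := by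
  have hz1 : z - 1 ≠ 0 := sub_ne_zero.2 hz
  induction n with
  | zero => simp
  | succ n ih =>
    rw [Finset.sum_range_succ, ih]
    field_simp
    ring

theorem circleIntegral_cexp_mul_pow_div_sub_one_pow_eq_genLaguerre {c : ℂ} {R : ℝ}
    (h1 : 1 ∈ ball c R) (t : ℝ) (j α : ℕ) :
    ∮ z in C(c, R), cexp (-t * z) * z ^ (j + α) / (z - 1) ^ (j + 1)
      = 2 * π * I * cexp (-t) * genLaguerre j α t := by
  have hdiff : Differentiable ℂ fun z => cexp (-t * z) * z ^ (j + α) := by fun_prop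
  simp_rw [div_eq_inv_mul, ← one_div, ← smul_eq_mul (_ / _),
    circleIntegral_one_div_sub_pow_smul_of_differentiable hdiff h1,
    iteratedDeriv_cexp_mul_pow_one_eq_genLaguerre, smul_eq_mul]
  have hfac : (j.factorial : ℂ) ≠ 0 := Nat.cast_ne_zero.2 j.factorial_ne_zero
  field_simp

theorem circleIntegral_div_mul_sub_one {c : ℂ} {R : ℝ} {A : ℂ} (hA : A ≠ 0)
    (hA' : 1 / A ∈ ball c R) {g : ℂ → ℂ} (hg : Differentiable ℂ g) :
    ∮ z in C(c, R), g z / (A * z - 1) = 2 * π * I * (g (1 / A) / A) := by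
  have hpole : ∀ z, g z / (A * z - 1) = (1 / (z - 1 / A) ^ (0 + 1)) • (g z / A) := fun z => by
    rw [smul_eq_mul, zero_add, pow_one, div_mul_div_comm, one_mul, sub_mul,
      div_mul_cancel₀ _ hA, mul_comm z]
  simp_rw [hpole, circleIntegral_one_div_sub_pow_smul_of_differentiable (hg.div_const A) hA',
    iteratedDeriv_zero, Nat.factorial_zero, Nat.cast_one, div_one, smul_eq_mul]

theorem neg_pow_mul_circleIntegral_eq_sub_sum_genLaguerre {c : ℂ} {R : ℝ} {b : ℂ}
    (hb : 1 + b ≠ 0) (h1 : 1 ∈ ball c R) (hb1 : 1 / (1 + b) ∈ ball c R) (t : ℝ)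
    (α n : ℕ) :
    (-b) ^ n * ∮ z in C(c, R), cexp (-t * z) * z ^ (n + α) / ((z - 1) ^ n * ((1 + b) * z - 1))
      = 2 * π * I * (cexp (-t / (1 + b)) / (1 + b) ^ (α + 1)
          - cexp (-t) * ∑ j ∈ Finset.range n, (-b) ^ j * genLaguerre j α t) := by
  have hR : 0 ≤ R := dist_nonneg.trans (mem_ball.1 h1).le
  have hz1 : ∀ z ∈ sphere c R, z - 1 ≠ 0 := fun z hz =>
    sub_ne_zero.2 (sphere_disjoint_ball.ne_of_mem hz h1)
  have hzb : ∀ z ∈ sphere c R, (1 + b) * z - 1 ≠ 0 := fun z hz h =>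
    sphere_disjoint_ball.ne_of_mem hz hb1 (by field_simp; linear_combination h)
  have hsum := circleIntegral.integral_congr hR fun z hz =>
    sum_neg_pow_mul_div_sub_one_pow (sub_ne_zero.1 (hz1 z hz)) (hzb z hz) (cexp (-t * z)) α n
  rw [circleIntegral.integral_fun_sum, circleIntegral.integral_sub,
    circleIntegral.integral_const_mul] at hsum
  · have hdiff : Differentiable ℂ fun z => cexp (-t * z) * z ^ α := by fun_prop
    simp_rw [circleIntegral.integral_const_mul,
      circleIntegral_cexp_mul_pow_div_sub_one_pow_eq_genLaguerre h1,
      circleIntegral_div_mul_sub_one hb hb1 hdiff] at hsum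
    have hpole : cexp (-t * (1 / (1 + b))) * (1 / (1 + b)) ^ α / (1 + b)
        = cexp (-t / (1 + b)) / (1 + b) ^ (α + 1) := by
      rw [mul_one_div, one_div_pow, pow_succ]
      field_simp
    simp only [mul_left_comm _ (2 * π * I * cexp (-t)), ← Finset.mul_sum, hpole] at hsum
    linear_combination hsum
  all_goals
    try intro j _
    refine ContinuousOn.circleIntegrable hR ?_
    fun_prop (disch := intro z hz; simp [hz1 z hz, hzb z hz])

theorem stmt_18_general (M N : ℕ) (hN : 1 ≤ N) (hMN : N ≤ M) (a : ℝ) (ha : -1 < a)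
    (c : ℂ) (R : ℝ) (h1 : ‖1 - c‖ < R)
    (h2 : ‖1 / (1 + (a : ℂ)) - c‖ < R)
    (x : ℝ) :
    ((Real.exp (a / (1 + a) * (2 * (M : ℝ) * x)) -
        (1 + a) ^ (2 * (M - N) + 1) *
          ∑ j ∈ Finset.range (2 * N - 1),
            (-a) ^ j * genLaguerre j (2 * (M - N)) (2 * (M : ℝ) * x) : ℝ) : ℂ)
      = -(1 + (a : ℂ)) ^ (2 * (M - N) + 1) * (a : ℂ) ^ (2 * N - 1) *
          (Complex.exp (2 * (M : ℂ) * (x : ℂ)) / (2 * (Real.pi : ℂ) * Complex.I)) *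
          ∮ z in C(c, R),
            Complex.exp (-(2 * (M : ℂ) * (x : ℂ)) * z) * z ^ (2 * M - 1) /
              ((z - 1) ^ (2 * N - 1) * ((1 + (a : ℂ)) * z - 1)) := by
  have hA : (1 + a : ℂ) ≠ 0 := by exact_mod_cast (by linarith : 1 + a ≠ 0)
  have key := neg_pow_mul_circleIntegral_eq_sub_sum_genLaguerre hA (mem_ball_iff_norm.2 h1)
    (mem_ball_iff_norm.2 h2) (2 * M * x) (2 * (M - N)) (2 * N - 1)
  rw [show 2 * N - 1 + 2 * (M - N) = 2 * M - 1 by omega,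
    Odd.neg_pow ⟨N - 1, by omega⟩, neg_mul] at key
  push_cast at key ⊢
  have hexp : cexp (a / (1 + a) * (2 * M * x))
      = cexp (2 * M * x) * cexp (-(2 * M * x) / (1 + a)) := by
    rw [← Complex.exp_add]
    congr 1
    field_simp
    ring
  have hexp_neg : cexp (2 * M * x) * cexp (-(2 * M * x)) = 1 := by
    rw [← Complex.exp_add, add_neg_cancel, Complex.exp_zero]
  have hpow :
      (1 + (a : ℂ)) ^ (2 * (M - N) + 1) * ((1 + (a : ℂ)) ^ (2 * (M - N) + 1))⁻¹ = 1 :=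
    mul_inv_cancel₀ (pow_ne_zero _ hA)
  rw [show ∀ J : ℂ, -(1 + (a : ℂ)) ^ (2 * (M - N) + 1) * (a : ℂ) ^ (2 * N - 1) *
      (cexp (2 * M * x) / (2 * π * Complex.I)) * J
      = (1 + (a : ℂ)) ^ (2 * (M - N) + 1) * cexp (2 * M * x) *
        (-((a : ℂ) ^ (2 * N - 1) * J) / (2 * π * Complex.I)) from fun J => by ring,
    key, mul_div_cancel_left₀ _ two_pi_I_ne_zero, hexp]
  linear_combination (-(cexp (2 * M * x) * cexp (-(2 * M * x) / (1 + a)))) * hpow +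
    ((1 + (a : ℂ)) ^ (2 * (M - N) + 1) * ∑ j ∈ Finset.range (2 * N - 1),
      (-(a : ℂ)) ^ j * genLaguerre j (2 * (M - N)) (2 * M * x)) * hexp_neg

/-- The contour-integral representation of the last skew-orthogonal function `φ_{2N-1}`
in the rank-one quaternionic spiked Wishart model: for any circle (center `c`, radius
`R`) enclosing `1` and `1/(1+a)` but not `0`, and any real `x`,
`φ_{2N-1}(x) = -(1+a)^{2(M-N)+1} a^{2N-1} (e^{2Mx}/(2πi))
  ∮ e^{-2Mxz} z^{2M-1} / ((z-1)^{2N-1} ((1+a)z - 1)) dz`. -/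
theorem stmt_18 (M N : ℕ) (hN : 1 ≤ N) (hMN : N ≤ M) (a : ℝ) (ha : -1 < a)
    (c : ℂ) (R : ℝ) (h1 : ‖1 - c‖ < R)
    (h2 : ‖1 / (1 + (a : ℂ)) - c‖ < R)
    (h0 : R < ‖c‖) (x : ℝ) :
    ((Real.exp (a / (1 + a) * (2 * (M : ℝ) * x)) -
        (1 + a) ^ (2 * (M - N) + 1) *
          ∑ j ∈ Finset.range (2 * N - 1),
            (-a) ^ j * genLaguerre j (2 * (M - N)) (2 * (M : ℝ) * x) : ℝ) : ℂ)
      = -(1 + (a : ℂ)) ^ (2 * (M - N) + 1) * (a : ℂ) ^ (2 * N - 1) *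
          (Complex.exp (2 * (M : ℂ) * (x : ℂ)) / (2 * (Real.pi : ℂ) * Complex.I)) *
          ∮ z in C(c, R),
            Complex.exp (-(2 * (M : ℂ) * (x : ℂ)) * z) * z ^ (2 * M - 1) /
              ((z - 1) ^ (2 * N - 1) * ((1 + (a : ℂ)) * z - 1)) :=
  stmt_18_general M N hN hMN a ha c R h1 h2 x
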